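/- Let f̃₁, f̃₂, h̃₁, h̃₂ be entire functions with f̃₁(0) = f̃₂(0) = 0 satisfying f̃₁ + f̃₁' = 2 f̃₁(·/2) + h̃₁ and f̃₂ + f̃₂' = 2 f̃₂(·/2) + h̃₂. Then Ṽ(z) := f̃₂(z) - f̃₁(z)² - z f̃₁'(z)² satisfies Ṽ(0) = 0 and Ṽ(z) + Ṽ'(z) = 2Ṽ(z/2) + g̃(z), where g̃(z) = z f̃₁''(z)² + h̃₂(z) - h̃₁(z)² - z h̃₁'(z)² - 4 h̃₁(z) f̃₁(z/2) - 2z h̃₁'(z) f̃₁'(z/2) - 2 f̃₁(z/2)². -/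

import Mathlib

/-!
Differentiating the equation for `f̃₁` gives `f̃₁' + f̃₁'' = f̃₁'(·/2) + h̃₁'`; this is legitimate
because `f̃₁'` is again entire, hence so is `h̃₁ = f̃₁ + f̃₁' - 2 f̃₁(·/2)`. The derivative of `Ṽ`
involves `f̃₂'`, `f̃₁'` and `f̃₁''`; eliminating them with the equations for `f̃₂`, `f̃₁` and `f̃₁'`
leaves exactly `2 Ṽ(·/2) + g̃`.
-/

section

variable {𝕜 : Type*} [NontriviallyNormedField 𝕜]

noncomputable def poissonizedVariance (f₁ f₂ : 𝕜 → 𝕜) (z : 𝕜) : 𝕜 :=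
  f₂ z - f₁ z ^ 2 - z * deriv f₁ z ^ 2

theorem deriv_poissonizedVariance {f₁ f₂ : 𝕜 → 𝕜} {z : 𝕜} (hf₁ : DifferentiableAt 𝕜 f₁ z)
    (hf₁' : DifferentiableAt 𝕜 (deriv f₁) z) (hf₂ : DifferentiableAt 𝕜 f₂ z) :
    deriv (poissonizedVariance f₁ f₂) z = deriv f₂ z - 2 * f₁ z * deriv f₁ z -
      deriv f₁ z ^ 2 - 2 * z * deriv f₁ z * iteratedDeriv 2 f₁ z := by
  have H : HasDerivAt (poissonizedVariance f₁ f₂) (deriv f₂ z - 2 * f₁ z ^ 1 * deriv f₁ z -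
      (1 * deriv f₁ z ^ 2 + z * (2 * deriv f₁ z ^ 1 * deriv (deriv f₁) z))) z :=
    (hf₂.hasDerivAt.sub (hf₁.hasDerivAt.pow 2)).sub
      ((hasDerivAt_id z).mul (hf₁'.hasDerivAt.pow 2))
  rw [H.deriv, iteratedDeriv_succ, iteratedDeriv_one]
  ring

end

theorem deriv_add_iteratedDeriv_two_of_add_deriv_eq {f h : ℂ → ℂ} (hf : Differentiable ℂ f)
    (e : ∀ z, f z + deriv f z = 2 * f (z / 2) + h z) (z : ℂ) :
    deriv f z + iteratedDeriv 2 f z = deriv f (z / 2) + deriv h z := by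
  have hh : h = fun x => f x + deriv f x - 2 * f (x / 2) :=
    funext fun x => by linear_combination -e x
  have hhalf : HasDerivAt (fun x => f (x / 2)) (deriv f (z / 2) * (1 / 2)) z :=
    (hf (z / 2)).hasDerivAt.comp z ((hasDerivAt_id z).div_const 2)
  have H : HasDerivAt h (deriv f z + deriv (deriv f) z - 2 * (deriv f (z / 2) * (1 / 2))) z := by
    rw [hh]
    exact ((hf z).hasDerivAt.add (hf.deriv z).hasDerivAt).sub (hhalf.const_mul 2)
  rw [H.deriv, iteratedDeriv_succ, iteratedDeriv_one]
  ring

theorem poissonized_variance_equation (f1 f2 h1 h2 : ℂ → ℂ)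
    (hf1 : Differentiable ℂ f1) (hf2 : Differentiable ℂ f2)
    (hf10 : f1 0 = 0) (hf20 : f2 0 = 0)
    (e1 : ∀ z : ℂ, f1 z + deriv f1 z = 2 * f1 (z / 2) + h1 z)
    (e2 : ∀ z : ℂ, f2 z + deriv f2 z = 2 * f2 (z / 2) + h2 z)
    (V g : ℂ → ℂ)
    (hV : ∀ z : ℂ, V z = f2 z - f1 z ^ 2 - z * (deriv f1 z) ^ 2)
    (hg : ∀ z : ℂ, g z =
      z * (iteratedDeriv 2 f1 z) ^ 2 + h2 z - h1 z ^ 2 - z * (deriv h1 z) ^ 2 -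
        4 * h1 z * f1 (z / 2) - 2 * z * deriv h1 z * deriv f1 (z / 2) - 2 * f1 (z / 2) ^ 2) :
    V 0 = 0 ∧ ∀ z : ℂ, V z + deriv V z = 2 * V (z / 2) + g z := by
  have hVdef : V = poissonizedVariance f1 f2 := funext hV
  refine ⟨by rw [hV, hf10, hf20]; ring, fun z => ?_⟩
  have e1' := deriv_add_iteratedDeriv_two_of_add_deriv_eq hf1 e1 z
  rw [hVdef, deriv_poissonizedVariance (hf1 z) (hf1.deriv z) (hf2 z), hg]
  unfold poissonizedVariance
  linear_combination e2 z - (f1 z + deriv f1 z + 2 * f1 (z / 2) + h1 z) * e1 z -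
    z * (deriv f1 z + iteratedDeriv 2 f1 z + deriv f1 (z / 2) + deriv h1 z) * e1'
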